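/- arXiv:2012.03543 — 6 statements merged into one kernel-verified Lean document; each statement's English description precedes it below -/
import Mathlib

section
/- Let n be a natural number, D an n×n real matrix with Dᵀ = -D, and m > 0 a real number. Then det(D - m·1ₙ) = (-1)^{N₀} · det(D + m·1ₙ), where N₀ is the dimension of the kernel of D (as a linear map ℝⁿ → ℝⁿ). Consequently the sign of det((D - m·1ₙ)(D + m·1ₙ)⁻¹) equals (-1)^{N₀}, i.e. (1 - sgn det((D - m·1ₙ)(D + m·1ₙ)⁻¹))/2 ≡ dim ker D (mod 2). -/
open Matrix

/-- For a real skew-symmetric matrix, `(-1) ^ dim ker = (-1) ^ n`. -/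
lemma skew_neg_one_pow_ker (n : ℕ) (D : Matrix (Fin n) (Fin n) ℝ)
    (hD : D.transpose = -D) :
    ((-1 : ℝ)) ^ (Module.finrank ℝ (LinearMap.ker D.mulVecLin)) = (-1 : ℝ) ^ n := by
  classical
  set K := LinearMap.ker D.mulVecLin with hK
  obtain ⟨W, hW⟩ := Submodule.exists_isCompl K
  have hsum : Module.finrank ℝ K + Module.finrank ℝ W = n := by
    simpa using Submodule.finrank_add_eq_of_isCompl hW
  -- the bilinear form x ⬝ᵥ D y restricted to W is separating
  set B : (Fin n → ℝ) →ₗ[ℝ] (Fin n → ℝ) →ₗ[ℝ] ℝ := Matrix.toLinearMap₂' ℝ D with hB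
  have hBapp : ∀ x y : Fin n → ℝ, B x y = x ⬝ᵥ D *ᵥ y := fun x y =>
    Matrix.toLinearMap₂'_apply' D x y
  have hsep : (B.domRestrict₁₂ W W).SeparatingLeft := by
    intro x hx
    have hxall : ∀ y : Fin n → ℝ, (x : Fin n → ℝ) ⬝ᵥ D *ᵥ y = 0 := by
      intro y
      obtain ⟨k, w, hk, hw, rfl⟩ :=
        Submodule.codisjoint_iff_exists_add_eq.mp hW.codisjoint y
      have hk0 : D *ᵥ k = 0 := hk
      have h1 : (x : Fin n → ℝ) ⬝ᵥ D *ᵥ k = 0 := by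
        rw [hk0, dotProduct_zero]
      have h2 : (x : Fin n → ℝ) ⬝ᵥ D *ᵥ w = 0 := by
        have := hx ⟨w, hw⟩
        rwa [LinearMap.domRestrict₁₂_apply, hBapp] at this
      rw [Matrix.mulVec_add, dotProduct_add, h1, h2, add_zero]
    have hDx : D *ᵥ (x : Fin n → ℝ) = 0 := by
      have h := hxall (D *ᵥ (x : Fin n → ℝ))
      rw [Matrix.dotProduct_mulVec, ← Matrix.mulVec_transpose, hD,
        Matrix.neg_mulVec, neg_dotProduct, neg_eq_zero,
        dotProduct_self_eq_zero] at h
      exact h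
    have hxK : (x : Fin n → ℝ) ∈ K := hDx
    have : (x : Fin n → ℝ) ∈ K ⊓ W := ⟨hxK, x.2⟩
    rw [hW.disjoint.eq_bot] at this
    exact Subtype.ext this
  -- even dimension of W
  have hWfin : FiniteDimensional ℝ W := inferInstance
  set d := Module.finrank ℝ W with hd
  let b : Module.Basis (Fin d) ℝ W := Module.finBasis ℝ W
  set M : Matrix (Fin d) (Fin d) ℝ := LinearMap.toMatrix₂ b b (B.domRestrict₁₂ W W) with hM
  have hdet : M.det ≠ 0 := (LinearMap.separatingLeft_iff_det_ne_zero b).mp hsep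
  have hMskew : Mᵀ = -M := by
    ext i j
    simp only [Matrix.transpose_apply, Matrix.neg_apply, hM, LinearMap.toMatrix₂_apply,
      LinearMap.domRestrict₁₂_apply, hBapp]
    rw [Matrix.dotProduct_mulVec, ← Matrix.mulVec_transpose, hD, Matrix.neg_mulVec,
      neg_dotProduct, dotProduct_comm]
  have hdetpow : M.det = (-1 : ℝ) ^ d * M.det := by
    conv_lhs => rw [← Matrix.det_transpose, hMskew, Matrix.det_neg]
    simp
  have heven : Even d := by
    rw [← neg_one_pow_eq_one_iff_even (R := ℝ) (by norm_num)]
    have h1 : (1 : ℝ) * M.det = (-1 : ℝ) ^ d * M.det := by rw [one_mul]; exact hdetpow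
    exact (mul_right_cancel₀ hdet h1).symm
  calc ((-1 : ℝ)) ^ (Module.finrank ℝ K)
      = (-1 : ℝ) ^ (Module.finrank ℝ K) * (-1 : ℝ) ^ d := by
        rw [heven.neg_one_pow, mul_one]
    _ = (-1 : ℝ) ^ (Module.finrank ℝ K + d) := (pow_add _ _ _).symm
    _ = (-1 : ℝ) ^ n := by rw [hsum]

/-- For a real skew-symmetric `n × n` matrix `D` and `m > 0`,
`det (D - m • 1) = (-1) ^ N₀ * det (D + m • 1)` where `N₀ = dim ker D`; consequently
the sign of `det ((D - m•1) (D + m•1)⁻¹)` is `(-1) ^ N₀`, i.e.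
`(1 - sgn det((D - m•1)(D + m•1)⁻¹)) / 2 ≡ dim ker D (mod 2)`. -/
theorem stmt_1 (n : ℕ) (D : Matrix (Fin n) (Fin n) ℝ) (hD : D.transpose = -D)
    (m : ℝ) (hm : 0 < m) :
    (D - m • (1 : Matrix (Fin n) (Fin n) ℝ)).det
      = (-1 : ℝ) ^ (Module.finrank ℝ (LinearMap.ker D.mulVecLin))
        * (D + m • (1 : Matrix (Fin n) (Fin n) ℝ)).det ∧
    Real.sign (((D - m • (1 : Matrix (Fin n) (Fin n) ℝ))
        * (D + m • (1 : Matrix (Fin n) (Fin n) ℝ))⁻¹).det)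
      = (-1 : ℝ) ^ (Module.finrank ℝ (LinearMap.ker D.mulVecLin)) ∧
    (1 - Real.sign (((D - m • (1 : Matrix (Fin n) (Fin n) ℝ))
        * (D + m • (1 : Matrix (Fin n) (Fin n) ℝ))⁻¹).det)) / 2
      = ((Module.finrank ℝ (LinearMap.ker D.mulVecLin) % 2 : ℕ) : ℝ) := by
  set N₀ := Module.finrank ℝ (LinearMap.ker D.mulVecLin) with hN
  set A := D + m • (1 : Matrix (Fin n) (Fin n) ℝ) with hA
  -- det (D - m•1) = (-1)^n det A
  have h1 : (D - m • (1 : Matrix (Fin n) (Fin n) ℝ)).det = (-1 : ℝ) ^ n * A.det := by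
    calc (D - m • (1 : Matrix (Fin n) (Fin n) ℝ)).det
        = (D - m • (1 : Matrix (Fin n) (Fin n) ℝ))ᵀ.det := (Matrix.det_transpose _).symm
      _ = (-(D + m • (1 : Matrix (Fin n) (Fin n) ℝ))).det := by
          rw [Matrix.transpose_sub, hD, Matrix.transpose_smul, Matrix.transpose_one]
          congr 1
          abel
      _ = (-1 : ℝ) ^ n * A.det := by rw [Matrix.det_neg, hA]; simp
  have hpow : ((-1 : ℝ)) ^ N₀ = (-1 : ℝ) ^ n := skew_neg_one_pow_ker n D hD
  have hfirst : (D - m • (1 : Matrix (Fin n) (Fin n) ℝ)).det = (-1 : ℝ) ^ N₀ * A.det := by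
    rw [h1, hpow]
  -- A is invertible
  have hAdet : A.det ≠ 0 := by
    intro h
    obtain ⟨v, hv, hAv⟩ := Matrix.exists_mulVec_eq_zero_iff.mpr h
    have hDv : D *ᵥ v = -(m • v) := by
      have h0 : D *ᵥ v + m • v = 0 := by
        rw [hA, Matrix.add_mulVec, Matrix.smul_mulVec, Matrix.one_mulVec] at hAv
        exact hAv
      exact eq_neg_of_add_eq_zero_left h0
    have ha1 : v ⬝ᵥ D *ᵥ v = -(m * (v ⬝ᵥ v)) := by
      rw [hDv]
      simp [dotProduct_smul, smul_eq_mul]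
    have ha2 : v ⬝ᵥ D *ᵥ v = m * (v ⬝ᵥ v) := by
      rw [Matrix.dotProduct_mulVec, ← Matrix.mulVec_transpose, hD, Matrix.neg_mulVec, hDv]
      simp [smul_dotProduct, smul_eq_mul]
    have hvv : v ⬝ᵥ v = 0 := by
      have := ha1.symm.trans ha2
      have hm' : m ≠ 0 := ne_of_gt hm
      nlinarith [this]
    exact hv (dotProduct_self_eq_zero.mp hvv)
  -- the determinant of the product
  have hdetprod : ((D - m • (1 : Matrix (Fin n) (Fin n) ℝ)) * A⁻¹).det = (-1 : ℝ) ^ N₀ := by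
    rw [Matrix.det_mul, Matrix.det_nonsing_inv, Ring.inverse_eq_inv', hfirst,
      mul_assoc, mul_inv_cancel₀ hAdet, mul_one]
  refine ⟨hfirst, ?_, ?_⟩
  · rw [hdetprod]
    rcases Nat.even_or_odd N₀ with he | ho
    · rw [he.neg_one_pow, Real.sign_one]
    · rw [ho.neg_one_pow]
      have : Real.sign (-1 : ℝ) = -1 := Real.sign_of_neg (by norm_num)
      rw [this]
  · rw [hdetprod]
    rcases Nat.even_or_odd N₀ with he | ho
    · rw [he.neg_one_pow, Real.sign_one, Nat.even_iff.mp he]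
      norm_num
    · rw [ho.neg_one_pow, Real.sign_of_neg (by norm_num : (-1 : ℝ) < 0), Nat.odd_iff.mp ho]
      norm_num
end

section
/- Let D be an invertible n×n real matrix with Dᵀ = -D, and let A and A' be n×n real matrices such that Aᵀ·D·A = A'ᵀ·D·A' and this common matrix is invertible. Then det(A) · det(A') > 0, i.e. det(A) and det(A') have the same sign. -/
open Matrix Complex
open scoped MatrixOrder

section helpers
variable {n : ℕ}

lemma psd_transpose_eq {A : Matrix (Fin n) (Fin n) ℝ} (hA : A.PosSemidef) : Aᵀ = A := by
  rw [← Matrix.conjTranspose_eq_transpose_of_trivial]; exact hA.1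

lemma psd_det_nonneg {A : Matrix (Fin n) (Fin n) ℝ} (hA : A.PosSemidef) : 0 ≤ A.det := by
  have h : (CFC.sqrt A) ^ 2 = A := CFC.sq_sqrt A hA.nonneg
  rw [← h, pow_two, Matrix.det_mul]
  exact mul_self_nonneg _

lemma commute_inv_left {A B : Matrix (Fin n) (Fin n) ℝ} (hA : IsUnit A.det)
    (h : A * B = B * A) : A⁻¹ * B = B * A⁻¹ := by
  letI := A.invertibleOfIsUnitDet hA
  have h2 : A⁻¹ * (A * B) * A⁻¹ = A⁻¹ * (B * A) * A⁻¹ := by rw [h]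
  rw [Matrix.inv_mul_cancel_left_of_invertible] at h2
  rw [← Matrix.mul_assoc A⁻¹ B A, Matrix.mul_inv_cancel_right_of_invertible] at h2
  exact h2.symm

/-- congruence of a product of a symmetric matrix with itself by a skew matrix
(under commutation with `D * D`) is positive semidefinite. -/
lemma conj_psd (D R : Matrix (Fin n) (Fin n) ℝ) (hD : Dᵀ = -D) (hDd : IsUnit D.det)
    (hRt : Rᵀ = R) (hcm : D * D * R = R * (D * D)) :
    PosSemidef (D * (R * R) * D⁻¹) := by
  letI := D.invertibleOfIsUnitDet hDd
  have hDti : (D⁻¹)ᵀ = -(D⁻¹) := by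
    rw [Matrix.transpose_nonsing_inv, hD]
    exact Matrix.inv_eq_right_inv (by rw [neg_mul_neg, Matrix.mul_nonsing_inv _ hDd])
  have hTcomm : D⁻¹ * R * D = D * R * D⁻¹ := by
    have h1 : D⁻¹ * (D * D * R) * D⁻¹ = D⁻¹ * (R * (D * D)) * D⁻¹ := by rw [hcm]
    rw [show D * D * R = D * (D * R) from Matrix.mul_assoc D D R,
      Matrix.inv_mul_cancel_left_of_invertible] at h1
    rw [show R * (D * D) = R * D * D from (Matrix.mul_assoc R D D).symm,
      ← Matrix.mul_assoc D⁻¹ (R * D) D, Matrix.mul_inv_cancel_right_of_invertible] at h1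
    rw [← Matrix.mul_assoc D⁻¹ R D] at h1
    exact h1.symm
  have hTt : (D * R * D⁻¹)ᵀ = D * R * D⁻¹ := by
    rw [Matrix.transpose_mul, Matrix.transpose_mul, hDti, hRt, hD]
    simp only [Matrix.neg_mul, Matrix.mul_neg, neg_neg]
    rw [← Matrix.mul_assoc]
    exact hTcomm
  have hTT : (D * R * D⁻¹) * (D * R * D⁻¹) = D * (R * R) * D⁻¹ := by
    calc D * R * D⁻¹ * (D * R * D⁻¹) = D * R * (D⁻¹ * (D * (R * D⁻¹))) := by
          simp only [Matrix.mul_assoc]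
      _ = D * R * (R * D⁻¹) := by rw [Matrix.inv_mul_cancel_left_of_invertible]
      _ = D * (R * R) * D⁻¹ := by simp only [Matrix.mul_assoc]
  have h := Matrix.posSemidef_self_mul_conjTranspose (D * R * D⁻¹)
  rwa [Matrix.conjTranspose_eq_transpose_of_trivial, hTt, hTT] at h

end helpers

lemma det_pos_of_commute_complexStructure {n : ℕ} (Q W : Matrix (Fin n) (Fin n) ℝ)
    (hcomm : Q * W = W * Q) (hW2 : W * W = -1) (hQ : Q.det ≠ 0) : 0 < Q.det := by
  classical
  set φ : ℝ →+* ℂ := Complex.ofRealHom with hφ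
  set Qc : Matrix (Fin n) (Fin n) ℂ := Q.map φ with hQc
  set Wc : Matrix (Fin n) (Fin n) ℂ := W.map φ with hWc
  have mapmul : ∀ (M N : Matrix (Fin n) (Fin n) ℝ), (M * N).map φ = M.map φ * N.map φ := by
    intro M N; exact Matrix.map_mul
  have hWc2 : Wc * Wc = -1 := by
    rw [← mapmul, hW2]
    ext i j
    simp [Matrix.map_apply, Matrix.one_apply, apply_ite]
  have hQWc : Qc * Wc = Wc * Qc := by rw [← mapmul, ← mapmul, hcomm]
  set u : Matrix (Fin n) (Fin n) ℂ := Complex.I • Wc with hu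
  have hu2 : u * u = 1 := by
    rw [hu, Matrix.smul_mul, Matrix.mul_smul, smul_smul, Complex.I_mul_I, hWc2]
    simp
  have hQu : Qc * u = u * Qc := by
    rw [hu, Matrix.mul_smul, Matrix.smul_mul, hQWc]
  set A₁ : Matrix (Fin n) (Fin n) ℂ := (Qc + 1) + (Qc - 1) * u with hA₁
  set A₂ : Matrix (Fin n) (Fin n) ℂ := (Qc + 1) - (Qc - 1) * u with hA₂
  have four : (4 : ℂ) • Qc = Qc + Qc + Qc + Qc := by
    rw [show (4:ℂ) = 1+1+1+1 by norm_num, add_smul, add_smul, add_smul, one_smul]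
  have hmul : A₁ * A₂ = (4 : ℂ) • Qc := by
    have h1 : u * Qc = Qc * u := hQu.symm
    have expand : A₁ * A₂ =
        (Qc + 1) * (Qc + 1) - (Qc - 1) * u * ((Qc - 1) * u)
          + ((Qc - 1) * u * (Qc + 1) - (Qc + 1) * ((Qc - 1) * u)) := by
      rw [hA₁, hA₂]; noncomm_ring
    have hcomm' : (Qc - 1) * u * (Qc + 1) = (Qc + 1) * ((Qc - 1) * u) := by
      calc (Qc - 1) * u * (Qc + 1)
          = (Qc - 1) * (u * Qc + u) := by rw [Matrix.mul_assoc, Matrix.mul_add, Matrix.mul_one]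
        _ = (Qc - 1) * (Qc * u + u) := by rw [h1]
        _ = (Qc + 1) * ((Qc - 1) * u) := by noncomm_ring
    have hFF : (Qc - 1) * u * ((Qc - 1) * u) = (Qc - 1) * (Qc - 1) := by
      calc (Qc - 1) * u * ((Qc - 1) * u)
          = (Qc - 1) * ((u * Qc - u) * u) := by noncomm_ring
        _ = (Qc - 1) * ((Qc * u - u) * u) := by rw [h1]
        _ = (Qc - 1) * ((Qc - 1) * (u * u)) := by noncomm_ring
        _ = (Qc - 1) * (Qc - 1) := by rw [hu2, Matrix.mul_one]
    rw [expand, hcomm', hFF, four]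
    noncomm_ring
  -- conjugation: A₂ = A₁.map conj
  have hQcconj : Qc.map (starRingEnd ℂ) = Qc := by
    ext i j; simp [hQc, hφ, Matrix.map_apply, Complex.ofRealHom_eq_coe, Complex.conj_ofReal]
  have huconj : u.map (starRingEnd ℂ) = -u := by
    ext i j
    simp [hu, hWc, hφ, Matrix.map_apply, Matrix.smul_apply, Complex.ofRealHom_eq_coe, Complex.conj_ofReal]
  have hconj : A₁.map (starRingEnd ℂ) = A₂ := by
    have h1 : ((Qc - 1) * u).map (starRingEnd ℂ)
        = (Qc - 1).map (starRingEnd ℂ) * u.map (starRingEnd ℂ) := Matrix.map_mul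
    have h2 : (Qc - 1).map (starRingEnd ℂ) = Qc - 1 := by
      ext i j
      simp only [Matrix.map_apply, Matrix.sub_apply, Matrix.one_apply, apply_ite, hQc, hφ,
        Complex.ofRealHom_eq_coe, Complex.conj_ofReal, _root_.map_one, _root_.map_zero, map_sub]
      split <;> simp
    have h3 : A₁.map (starRingEnd ℂ) = (Qc + 1).map (starRingEnd ℂ) + ((Qc - 1) * u).map (starRingEnd ℂ) := by
      rw [hA₁]; exact Matrix.map_add _ (by simp) _ _
    have h4 : (Qc + 1).map (starRingEnd ℂ) = Qc + 1 := by
      ext i j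
      simp only [Matrix.map_apply, Matrix.add_apply, Matrix.one_apply, apply_ite, hQc, hφ,
        Complex.ofRealHom_eq_coe, Complex.conj_ofReal, _root_.map_one, _root_.map_zero, map_add]
      split <;> simp
    rw [h3, h4, h1, h2, huconj, hA₂]
    noncomm_ring
  -- determinants
  have hdet2 : A₂.det = (starRingEnd ℂ) A₁.det := by
    have := (starRingEnd ℂ).map_det A₁
    rw [RingHom.mapMatrix_apply] at this
    rw [← hconj, ← this]
  have hdetQc : Qc.det = (Q.det : ℂ) := by
    have := φ.map_det Q
    rw [RingHom.mapMatrix_apply] at this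
    rw [hQc, ← this, hφ, Complex.ofRealHom_eq_coe]
  have hdd : A₁.det * A₂.det = (4:ℂ)^n * (Q.det : ℂ) := by
    have := Matrix.det_mul A₁ A₂
    rw [hmul] at this
    rw [← this, Matrix.det_smul, hdetQc]
    simp [Finset.card_univ]
  have hnormsq : A₁.det * A₂.det = (Complex.normSq A₁.det : ℂ) := by
    rw [hdet2, Complex.mul_conj]
  have key : (4:ℝ)^n * Q.det = Complex.normSq A₁.det := by
    have : ((4:ℝ)^n * Q.det : ℂ) = ((Complex.normSq A₁.det : ℝ) : ℂ) := by
      push_cast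
      rw [← hdd, hnormsq]
    exact_mod_cast this
  have hpos : 0 < Complex.normSq A₁.det := by
    rcases lt_or_eq_of_le (Complex.normSq_nonneg A₁.det) with h | h
    · exact h
    · exfalso
      apply hQ
      have h4 : (0:ℝ) < 4^n := by positivity
      have := key
      rw [← h] at this
      field_simp at this
      exact (mul_eq_zero.mp this).resolve_left h4.ne'
  nlinarith [key, pow_pos (show (0:ℝ) < 4 by norm_num) n]

lemma orth_det_pos {n : ℕ} (W B : Matrix (Fin n) (Fin n) ℝ)
    (hW2 : W * W = -1) (hWt : Wᵀ = -W) (hB : Bᵀ * W * B = W) (hBd : IsUnit B.det) :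
    0 < B.det := by
  classical
  have hWinv : W * (-W) = 1 := by rw [Matrix.mul_neg, hW2, neg_neg]
  have hWd : IsUnit W.det := by
    have h := Matrix.det_mul W (-W)
    rw [hWinv, Matrix.det_one] at h
    exact IsUnit.of_mul_eq_one _ h.symm
  letI := W.invertibleOfIsUnitDet hWd
  letI := B.invertibleOfIsUnitDet hBd
  have hBtd : IsUnit Bᵀ.det := by rwa [Matrix.det_transpose]
  letI := Bᵀ.invertibleOfIsUnitDet hBtd
  have hWi : W⁻¹ = -W := Matrix.inv_eq_right_inv hWinv
  -- B * W * Bᵀ = W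
  have hBWB : B * W * Bᵀ = W := by
    have h1 : (Bᵀ * W * B)⁻¹ = W⁻¹ := by rw [hB]
    rw [Matrix.mul_inv_rev, Matrix.mul_inv_rev] at h1
    -- h1 : B⁻¹ * (W⁻¹ * (Bᵀ)⁻¹) = W⁻¹
    rw [hWi] at h1
    -- B⁻¹ * (-W * (Bᵀ)⁻¹) = -W
    rw [Matrix.neg_mul, Matrix.mul_neg, neg_inj] at h1
    have h2 := congrArg (fun M => B * M * Bᵀ) h1
    rw [Matrix.mul_inv_cancel_left_of_invertible,
      Matrix.inv_mul_cancel_right_of_invertible] at h2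
    exact h2.symm
  -- the Gram matrix
  set G := Bᵀ * B with hGs
  have hG : G.PosSemidef := by
    have h := Matrix.posSemidef_conjTranspose_mul_self B
    rwa [Matrix.conjTranspose_eq_transpose_of_trivial] at h
  have hGd : IsUnit G.det := by
    rw [hGs, Matrix.det_mul, Matrix.det_transpose]; exact hBd.mul hBd
  letI := G.invertibleOfIsUnitDet hGd
  have hGWG : G * W * G = W := by
    rw [hGs]
    calc Bᵀ * B * W * (Bᵀ * B) = Bᵀ * (B * W * Bᵀ) * B := by simp only [Matrix.mul_assoc]
      _ = Bᵀ * W * B := by rw [hBWB]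
      _ = W := hB
  set P := CFC.sqrt G with hPs
  have hP : P.PosSemidef := (CFC.sqrt_nonneg G).posSemidef
  have hP2 : P ^ 2 = G := CFC.sq_sqrt G hG.nonneg
  have hPt : Pᵀ = P := psd_transpose_eq hP
  have hPd : IsUnit P.det := by
    have h : IsUnit (P.det ^ 2) := by rw [← Matrix.det_pow, hP2]; exact hGd
    exact (isUnit_pow_iff two_ne_zero).mp h
  letI := P.invertibleOfIsUnitDet hPd
  have hPdpos : 0 < P.det := lt_of_le_of_ne (psd_det_nonneg hP) (fun h => hPd.ne_zero h.symm)
  -- P⁻¹ is possemidef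
  have hPti : (P⁻¹)ᵀ = P⁻¹ := by rw [Matrix.transpose_nonsing_inv, hPt]
  have hPinvPsd : (P⁻¹).PosSemidef := by
    have h := hP.conjTranspose_mul_mul_same P⁻¹
    rwa [Matrix.conjTranspose_eq_transpose_of_trivial, hPti, Matrix.mul_assoc,
      Matrix.inv_mul_cancel_left_of_invertible] at h
  -- N = Wᵀ * P⁻¹ * W is possemidef with square G
  have hN : (Wᵀ * P⁻¹ * W).PosSemidef := by
    have h := hPinvPsd.conjTranspose_mul_mul_same W
    rwa [Matrix.conjTranspose_eq_transpose_of_trivial] at h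
  have hWWt : W * Wᵀ = 1 := by rw [hWt, hWinv]
  have hWtW : Wᵀ * W = 1 := by rw [hWt, Matrix.neg_mul, hW2, neg_neg]
  have hGinv : Wᵀ * G⁻¹ * W = G := by
    have e1 : G * (W * G) = W := by rw [← Matrix.mul_assoc]; exact hGWG
    have e2 : W * G = G⁻¹ * W := by
      have := congrArg (fun M => G⁻¹ * M) e1
      rwa [Matrix.inv_mul_cancel_left_of_invertible] at this
    rw [hWt, Matrix.neg_mul, Matrix.neg_mul, Matrix.mul_assoc, ← e2, ← Matrix.mul_assoc, hW2,
      neg_one_mul, neg_neg]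
  have hN2 : (Wᵀ * P⁻¹ * W) ^ 2 = G := by
    rw [pow_two]
    calc (Wᵀ * P⁻¹ * W) * (Wᵀ * P⁻¹ * W) = Wᵀ * P⁻¹ * (W * Wᵀ) * (P⁻¹ * W) := by
          simp only [Matrix.mul_assoc]
      _ = Wᵀ * (P⁻¹ * P⁻¹) * W := by rw [hWWt, Matrix.mul_one]; simp only [Matrix.mul_assoc]
      _ = Wᵀ * G⁻¹ * W := by rw [← Matrix.mul_inv_rev, ← pow_two, hP2]
      _ = G := hGinv
  have hNP : Wᵀ * P⁻¹ * W = P := by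
    have h := (CFC.sqrt_unique (a := G) (by rw [← pow_two]; exact hN2) hN.nonneg).symm
    rwa [← hPs] at h
  have h4 : P⁻¹ * W = W * P := by
    have h := congrArg (fun M => W * M) hNP
    rwa [← Matrix.mul_assoc W, ← Matrix.mul_assoc W, hWWt, Matrix.one_mul] at h
  have hPWP : W = P * (W * P) := by
    have h := congrArg (fun M => P * M) h4
    rwa [Matrix.mul_inv_cancel_left_of_invertible] at h
  -- the orthogonal part
  set Q := B * P⁻¹ with hQs
  have hQt : Qᵀ = P⁻¹ * Bᵀ := by rw [hQs, Matrix.transpose_mul, hPti]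
  have hQo : Qᵀ * Q = 1 := by
    rw [hQt, hQs]
    calc P⁻¹ * Bᵀ * (B * P⁻¹) = P⁻¹ * (Bᵀ * B) * P⁻¹ := by simp only [Matrix.mul_assoc]
      _ = P⁻¹ * (P * (P * P⁻¹)) := by rw [← hGs, ← hP2, pow_two]; simp only [Matrix.mul_assoc]
      _ = 1 := by rw [Matrix.inv_mul_cancel_left_of_invertible, Matrix.mul_nonsing_inv _ hPd] 
  have hQWQ : Qᵀ * W * Q = W := by
    rw [hQt, hQs]
    calc P⁻¹ * Bᵀ * W * (B * P⁻¹) = P⁻¹ * (Bᵀ * W * B) * P⁻¹ := by simp only [Matrix.mul_assoc]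
      _ = P⁻¹ * W * P⁻¹ := by rw [hB]
      _ = P⁻¹ * (P * (W * P)) * P⁻¹ := by rw [← hPWP]
      _ = W * (P * P⁻¹) := by rw [Matrix.inv_mul_cancel_left_of_invertible]; simp only [Matrix.mul_assoc]
      _ = W := by rw [Matrix.mul_nonsing_inv _ hPd, Matrix.mul_one]
  have hQd : IsUnit Q.det := by
    have h := Matrix.det_mul Qᵀ Q
    rw [hQo, Matrix.det_one, Matrix.det_transpose] at h
    exact IsUnit.of_mul_eq_one _ h.symm
  letI := Q.invertibleOfIsUnitDet hQd
  have hQinv : Q⁻¹ = Qᵀ := Matrix.inv_eq_left_inv hQo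
  have hQWc : Q * W = W * Q := by
    have h := congrArg (fun M => Q * M) hQWQ
    rw [← hQinv] at h
    rw [← Matrix.mul_assoc Q, ← Matrix.mul_assoc Q, Matrix.mul_nonsing_inv _ hQd,
      Matrix.one_mul] at h
    exact h.symm
  have hQpos : 0 < Q.det := det_pos_of_commute_complexStructure Q W hQWc hW2 hQd.ne_zero
  have hBQP : B = Q * P := by
    rw [hQs, Matrix.mul_assoc, Matrix.nonsing_inv_mul _ hPd, Matrix.mul_one]
  rw [hBQP, Matrix.det_mul]
  exact mul_pos hQpos hPdpos

lemma exists_psd_sqrt {n : ℕ} {A : Matrix (Fin n) (Fin n) ℝ} (hA : A.PosSemidef) :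
    ∃ X : Matrix (Fin n) (Fin n) ℝ, X.PosSemidef ∧ X * X = A ∧
      ∀ N : Matrix (Fin n) (Fin n) ℝ, N.PosSemidef → N * N = A → N = X :=
  ⟨CFC.sqrt A, (CFC.sqrt_nonneg A).posSemidef, by rw [← pow_two]; exact CFC.sq_sqrt A hA.nonneg,
    fun N hN h => (CFC.sqrt_unique h hN.nonneg).symm⟩

lemma symplectic_det_pos {n : ℕ} (D C : Matrix (Fin n) (Fin n) ℝ)
    (hD : Dᵀ = -D) (hDd : IsUnit D.det) (hCd : IsUnit C.det)
    (hC : Cᵀ * D * C = D) : 0 < C.det := by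
  classical
  letI := D.invertibleOfIsUnitDet hDd
  set S := D * Dᵀ with hSs
  have hSneg : S = -(D * D) := by rw [hSs, hD, Matrix.mul_neg]
  have hS : S.PosSemidef := by
    have h := Matrix.posSemidef_self_mul_conjTranspose D
    rwa [Matrix.conjTranspose_eq_transpose_of_trivial] at h
  have hSd : IsUnit S.det := by
    rw [hSs, Matrix.det_mul, Matrix.det_transpose]; exact hDd.mul hDd
  have hDDS : D * D = -S := by rw [hSneg, neg_neg]
  have cDS : D * S = S * D := by
    rw [hSneg, Matrix.mul_neg, Matrix.neg_mul, Matrix.mul_assoc]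
  clear_value S
  clear hSs hSneg
  obtain ⟨X, hX, hXX, hXu⟩ := exists_psd_sqrt hS
  have hXd : IsUnit X.det := by
    have h : IsUnit (X.det * X.det) := by rw [← Matrix.det_mul, hXX]; exact hSd
    exact isUnit_of_mul_isUnit_left h
  letI := X.invertibleOfIsUnitDet hXd
  obtain ⟨Z, hZ, hZZ, hZu⟩ := exists_psd_sqrt hX
  have hZd : IsUnit Z.det := by
    have h : IsUnit (Z.det * Z.det) := by rw [← Matrix.det_mul, hZZ]; exact hXd
    exact isUnit_of_mul_isUnit_left h
  letI := Z.invertibleOfIsUnitDet hZd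
  obtain ⟨V, hV, hVV, hVu⟩ := exists_psd_sqrt hZ
  -- commutation with S
  have cSX : S * X = X * S := by rw [← hXX]; simp only [Matrix.mul_assoc]
  have cSZ : S * Z = Z * S := by
    rw [← hXX, ← hZZ]; simp only [Matrix.mul_assoc]
  have cSV : S * V = V * S := by
    rw [← hXX, ← hZZ, ← hVV]; simp only [Matrix.mul_assoc]
  have hcmZ : D * D * Z = Z * (D * D) := by
    rw [hDDS, Matrix.neg_mul, Matrix.mul_neg, cSZ]
  have hcmV : D * D * V = V * (D * D) := by
    rw [hDDS, Matrix.neg_mul, Matrix.mul_neg, cSV]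
  -- first conjugation: D * X * D⁻¹ = X
  have hU1 : PosSemidef (D * X * D⁻¹) := by
    have h := conj_psd D Z hD hDd (psd_transpose_eq hZ) hcmZ
    rwa [hZZ] at h
  have hU1sq : (D * X * D⁻¹) * (D * X * D⁻¹) = S := by
    calc D * X * D⁻¹ * (D * X * D⁻¹) = D * X * (D⁻¹ * (D * (X * D⁻¹))) := by
          simp only [Matrix.mul_assoc]
      _ = D * (X * X) * D⁻¹ := by
          rw [Matrix.inv_mul_cancel_left_of_invertible]; simp only [Matrix.mul_assoc]
      _ = S * (D * D⁻¹) := by rw [hXX, cDS]; simp only [Matrix.mul_assoc]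
      _ = S := by rw [Matrix.mul_nonsing_inv _ hDd, Matrix.mul_one]
  have hDXc : D * X * D⁻¹ = X := hXu _ hU1 hU1sq
  have cDX : D * X = X * D := by
    have h := congrArg (fun M => M * D) hDXc
    rwa [Matrix.inv_mul_cancel_right_of_invertible] at h
  -- second conjugation: D * Z * D⁻¹ = Z
  have hU2 : PosSemidef (D * Z * D⁻¹) := by
    have h := conj_psd D V hD hDd (psd_transpose_eq hV) hcmV
    rwa [hVV] at h
  have hU2sq : (D * Z * D⁻¹) * (D * Z * D⁻¹) = X := by
    calc D * Z * D⁻¹ * (D * Z * D⁻¹) = D * Z * (D⁻¹ * (D * (Z * D⁻¹))) := by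
          simp only [Matrix.mul_assoc]
      _ = D * (Z * Z) * D⁻¹ := by
          rw [Matrix.inv_mul_cancel_left_of_invertible]; simp only [Matrix.mul_assoc]
      _ = X * (D * D⁻¹) := by rw [hZZ, cDX]; simp only [Matrix.mul_assoc]
      _ = X := by rw [Matrix.mul_nonsing_inv _ hDd, Matrix.mul_one]
  have hDZc : D * Z * D⁻¹ = Z := hZu _ hU2 hU2sq
  have cDZ : D * Z = Z * D := by
    have h := congrArg (fun M => M * D) hDZc
    rwa [Matrix.inv_mul_cancel_right_of_invertible] at h
  -- the complex structure W and the conjugated symplectic matrix B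
  have cXiD : X⁻¹ * D = D * X⁻¹ := commute_inv_left hXd cDX.symm
  have cZiD : Z⁻¹ * D = D * Z⁻¹ := commute_inv_left hZd cDZ.symm
  have cXZ : X * Z = Z * X := by rw [← hZZ]; simp only [Matrix.mul_assoc]
  have cXiZ : X⁻¹ * Z = Z * X⁻¹ := commute_inv_left hXd cXZ
  have hW2 : (X⁻¹ * D) * (X⁻¹ * D) = -1 := by
    calc X⁻¹ * D * (X⁻¹ * D) = X⁻¹ * (D * X⁻¹) * D := by simp only [Matrix.mul_assoc]
      _ = X⁻¹ * (X⁻¹ * D) * D := by rw [← cXiD]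
      _ = (X⁻¹ * X⁻¹) * (D * D) := by simp only [Matrix.mul_assoc]
      _ = (X * X)⁻¹ * (-S) := by rw [Matrix.mul_inv_rev, hDDS]
      _ = S⁻¹ * (-S) := by rw [hXX]
      _ = -1 := by rw [Matrix.mul_neg, Matrix.nonsing_inv_mul _ hSd]
  have hXt : Xᵀ = X := psd_transpose_eq hX
  have hZt : Zᵀ = Z := psd_transpose_eq hZ
  have hWt : (X⁻¹ * D)ᵀ = -(X⁻¹ * D) := by
    rw [Matrix.transpose_mul, hD, Matrix.transpose_nonsing_inv, hXt]
    rw [Matrix.neg_mul]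
    rw [cXiD]
  have hdetB : (Z * C * Z⁻¹).det = C.det := by
    rw [Matrix.det_mul, Matrix.det_mul, Matrix.det_nonsing_inv, Ring.inverse_eq_inv']
    field_simp [hZd.ne_zero]
  have hBd : IsUnit (Z * C * Z⁻¹).det := by rw [hdetB]; exact hCd
  have hZWZ : Z * (X⁻¹ * D) * Z = D := by
    calc Z * (X⁻¹ * D) * Z = Z * X⁻¹ * (D * Z) := by simp only [Matrix.mul_assoc]
      _ = X⁻¹ * Z * (Z * D) := by rw [← cXiZ, cDZ]
      _ = X⁻¹ * (Z * Z) * D := by simp only [Matrix.mul_assoc]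
      _ = D := by rw [hZZ, Matrix.nonsing_inv_mul _ hXd, Matrix.one_mul]
  have hBWB : (Z * C * Z⁻¹)ᵀ * (X⁻¹ * D) * (Z * C * Z⁻¹) = X⁻¹ * D := by
    rw [Matrix.transpose_mul, Matrix.transpose_mul, Matrix.transpose_nonsing_inv, hZt]
    calc Z⁻¹ * (Cᵀ * Z) * (X⁻¹ * D) * (Z * C * Z⁻¹)
        = Z⁻¹ * (Cᵀ * ((Z * (X⁻¹ * D) * Z) * (C * Z⁻¹))) := by simp only [Matrix.mul_assoc]
      _ = Z⁻¹ * (Cᵀ * (D * (C * Z⁻¹))) := by rw [hZWZ]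
      _ = Z⁻¹ * ((Cᵀ * D * C) * Z⁻¹) := by simp only [Matrix.mul_assoc]
      _ = Z⁻¹ * (D * Z⁻¹) := by rw [hC]
      _ = Z⁻¹ * (Z⁻¹ * D) := by rw [← cZiD]
      _ = X⁻¹ * D := by rw [← Matrix.mul_assoc, ← Matrix.mul_inv_rev, hZZ]
  have h := orth_det_pos (X⁻¹ * D) (Z * C * Z⁻¹) hW2 hWt hBWB hBd
  rwa [hdetB] at h

/-- If `D` is an invertible real skew-symmetric matrix and
`Aᵀ D A = A'ᵀ D A'` is invertible, then `det A` and `det A'` have the same sign. -/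
theorem stmt_4 (n : ℕ) (D A A' : Matrix (Fin n) (Fin n) ℝ)
    (hD : D.transpose = -D) (hDinv : IsUnit D)
    (h : A.transpose * D * A = A'.transpose * D * A')
    (hinv : IsUnit (A.transpose * D * A)) :
    0 < A.det * A'.det := by
  classical
  have hDd : IsUnit D.det := (Matrix.isUnit_iff_isUnit_det D).mp hDinv
  have hAd : IsUnit A.det := by
    have h1 : IsUnit (A.transpose * D * A).det := (Matrix.isUnit_iff_isUnit_det _).mp hinv
    rw [Matrix.det_mul, Matrix.det_mul, Matrix.det_transpose] at h1
    exact isUnit_of_mul_isUnit_right h1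
  have hA'd : IsUnit A'.det := by
    have h1 : IsUnit (A'.transpose * D * A').det := by
      rw [← h]; exact (Matrix.isUnit_iff_isUnit_det _).mp hinv
    rw [Matrix.det_mul, Matrix.det_mul, Matrix.det_transpose] at h1
    exact isUnit_of_mul_isUnit_right h1
  letI := A.invertibleOfIsUnitDet hAd
  have hAtd : IsUnit Aᵀ.det := by rwa [Matrix.det_transpose]
  letI := Aᵀ.invertibleOfIsUnitDet hAtd
  -- the transition matrix C = A' * A⁻¹ is symplectic
  have hCd : IsUnit (A' * A⁻¹).det := by
    rw [Matrix.det_mul, Matrix.det_nonsing_inv, Ring.inverse_eq_inv']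
    exact hA'd.mul (isUnit_iff_ne_zero.mpr (inv_ne_zero hAd.ne_zero))
  have hC : (A' * A⁻¹)ᵀ * D * (A' * A⁻¹) = D := by
    rw [Matrix.transpose_mul, Matrix.transpose_nonsing_inv]
    calc Aᵀ⁻¹ * A'ᵀ * D * (A' * A⁻¹)
        = Aᵀ⁻¹ * ((A'ᵀ * D * A') * A⁻¹) := by simp only [Matrix.mul_assoc]
      _ = Aᵀ⁻¹ * ((Aᵀ * D * A) * A⁻¹) := by rw [← h]
      _ = Aᵀ⁻¹ * (Aᵀ * (D * (A * A⁻¹))) := by simp only [Matrix.mul_assoc]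
      _ = D := by
          rw [Matrix.inv_mul_cancel_left_of_invertible, Matrix.mul_nonsing_inv _ hAd,
            Matrix.mul_one]
  have key := symplectic_det_pos D (A' * A⁻¹) hD hDd hCd hC
  have e : (A' * A⁻¹).det = A'.det * (A.det)⁻¹ := by
    rw [Matrix.det_mul, Matrix.det_nonsing_inv, Ring.inverse_eq_inv']
  have hAne : A.det ≠ 0 := hAd.ne_zero
  have e2 : A.det * A'.det = ((A' * A⁻¹).det) * (A.det * A.det) := by
    rw [e]
    field_simp
  rw [e2]
  exact mul_pos key (mul_self_pos.mpr hAne)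
end

section
/- Let H be a separable real Hilbert space and A : H → H an invertible continuous linear operator such that A - id is compact. Then there exist a norm-continuous path in 𝒞(H) from A to some invertible continuous linear operator B such that B - id has finite-dimensional range. -/
open Metric Set

/-- Finite-rank approximation of compact operators on a real Hilbert space. -/
lemma approx_finrank {H : Type*} [NormedAddCommGroup H] [InnerProductSpace ℝ H]
    [CompleteSpace H] (K : H →L[ℝ] H) (hK : IsCompactOperator ⇑K) {ε : ℝ} (hε : 0 < ε) :
    ∃ F : H →L[ℝ] H, FiniteDimensional ℝ (LinearMap.range ((F : H →L[ℝ] H) : H →ₗ[ℝ] H)) ∧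
      IsCompactOperator ⇑F ∧ ‖K - F‖ ≤ ε := by
  have hT : IsCompact (closure (⇑K '' Metric.ball 0 1)) :=
    hK.isCompact_closure_image_ball (𝕜₁ := ℝ) 1
  obtain ⟨t, htfin, htsub⟩ := (Metric.totallyBounded_iff.mp hT.totallyBounded) (ε / 2)
    (by positivity)
  set V : Submodule ℝ H := Submodule.span ℝ t with hV
  haveI : FiniteDimensional ℝ V := FiniteDimensional.span_of_finite ℝ htfin
  set P : H →L[ℝ] V := V.orthogonalProjectionOnto with hP
  set F : H →L[ℝ] H := V.subtypeL.comp (P.comp K) with hF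
  have hFV : ∀ x, F x ∈ V := fun x => (P (K x)).2
  have hdist : ∀ y ∈ closure (⇑K '' Metric.ball 0 1), ‖y - (P y : H)‖ ≤ ε / 2 := by
    intro y hy
    obtain ⟨c, hct, hyc⟩ := Set.mem_iUnion₂.mp (htsub hy)
    have hcV : c ∈ V := Submodule.subset_span hct
    calc ‖y - (P y : H)‖ = ⨅ x : V, ‖y - x‖ := Submodule.starProjection_minimal y
      _ ≤ ‖y - (⟨c, hcV⟩ : V)‖ :=
        ciInf_le ⟨0, fun _ ⟨x, hx⟩ => hx ▸ norm_nonneg _⟩ (⟨c, hcV⟩ : V)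
      _ ≤ ε / 2 := le_of_lt (by simpa [dist_eq_norm] using hyc)
  have hball : ∀ x ∈ Metric.ball (0 : H) 1, ‖(K - F) x‖ ≤ ε / 2 := by
    intro x hx
    have hKx : K x ∈ closure (⇑K '' Metric.ball 0 1) :=
      subset_closure (Set.mem_image_of_mem _ hx)
    exact hdist (K x) hKx
  refine ⟨F, ?_, ?_, ?_⟩
  · exact Submodule.finiteDimensional_of_le (S₂ := V)
      (by rintro _ ⟨x, rfl⟩; exact hFV x)
  · have : ⇑F = (⇑V.subtypeL ∘ ⇑P) ∘ ⇑K := by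
      ext x; rfl
    rw [this]
    exact hK.continuous_comp (V.subtypeL.continuous.comp P.continuous)
  · refine ContinuousLinearMap.opNorm_le_of_shell (ε := 1) one_pos hε.le
      (c := (2 : ℝ)) (by norm_num) ?_
    intro x hx1 hx2
    have h1 : ‖(K - F) x‖ ≤ ε / 2 := hball x (by simpa [dist_eq_norm] using hx2)
    have h2 : ε / 2 ≤ ε * ‖x‖ := by
      have : (1 : ℝ) / 2 ≤ ‖x‖ := by simpa using hx1
      nlinarith
    linarith

/-- Every invertible bounded operator `A` on a separable real Hilbert space
with `A - 1` compact is joined, by a norm-continuous path inside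
`𝒞(H) = {B | B invertible, B - 1 compact}`, to an invertible operator `B` such that
`B - 1` has finite-dimensional range. -/
theorem stmt_7 {H : Type*} [NormedAddCommGroup H] [InnerProductSpace ℝ H]
    [CompleteSpace H] [TopologicalSpace.SeparableSpace H]
    (A : H →L[ℝ] H) (hAunit : IsUnit A) (hAcpt : IsCompactOperator ⇑(A - 1)) :
    ∃ B : H →L[ℝ] H, IsUnit B ∧
      FiniteDimensional ℝ (LinearMap.range ((B - 1 : H →L[ℝ] H) : H →ₗ[ℝ] H)) ∧
      JoinedIn {C : H →L[ℝ] H | IsUnit C ∧ IsCompactOperator ⇑(C - 1)} A B := by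
  obtain ⟨u, hu⟩ := hAunit
  set n : ℝ := ‖(↑u⁻¹ : H →L[ℝ] H)‖ with hn
  rcases eq_or_lt_of_le (norm_nonneg (↑u⁻¹ : H →L[ℝ] H)) with h0 | h0
  · -- degenerate case: `u⁻¹ = 0`, so the whole ring is trivial
    have hinv : (↑u⁻¹ : H →L[ℝ] H) = 0 := by
      rw [← norm_eq_zero]; exact h0.symm
    have h10 : (1 : H →L[ℝ] H) = 0 := by
      rw [← u.inv_mul, hinv, zero_mul]
    have hA1 : A - 1 = 0 := by
      calc A - 1 = A * 1 - 1 := by rw [mul_one]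
        _ = 0 := by rw [h10, mul_zero, zero_sub, neg_zero]
    refine ⟨A, ⟨u, hu⟩, ?_, JoinedIn.refl ⟨⟨u, hu⟩, hAcpt⟩⟩
    rw [hA1]
    show FiniteDimensional ℝ (LinearMap.range (0 : H →ₗ[ℝ] H))
    rw [LinearMap.range_zero]
    infer_instance
  · set K : H →L[ℝ] H := A - 1 with hK
    obtain ⟨F, hFfin, hFc, hFnorm⟩ :=
      approx_finrank K hAcpt (ε := (3 * n)⁻¹) (by positivity)
    set B : H →L[ℝ] H := A + (F - K) with hB
    have hunit : ∀ t : ℝ, ‖t‖ ≤ 1 → IsUnit (A + t • (F - K)) := by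
      intro t ht
      have hkey : A + t • (F - K) = ↑u * (1 - (-(t • ((↑u⁻¹ : H →L[ℝ] H) * (F - K))))) := by
        rw [sub_neg_eq_add, mul_add, mul_one, mul_smul_comm, ← mul_assoc, u.mul_inv,
          one_mul, hu]
      rw [hkey]
      refine u.isUnit.mul (isUnit_one_sub_of_norm_lt_one ?_)
      have hFK : ‖F - K‖ ≤ (3 * n)⁻¹ := by rwa [norm_sub_rev]
      calc ‖-(t • ((↑u⁻¹ : H →L[ℝ] H) * (F - K)))‖
          = ‖t‖ * ‖(↑u⁻¹ : H →L[ℝ] H) * (F - K)‖ := by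
            rw [norm_neg]; exact norm_smul t ((↑u⁻¹ : H →L[ℝ] H) * (F - K))
        _ ≤ 1 * (n * (3 * n)⁻¹) :=
            mul_le_mul ht (le_trans (norm_mul_le _ _)
              (mul_le_mul_of_nonneg_left hFK (norm_nonneg _))) (norm_nonneg _) zero_le_one
        _ = 1 / 3 := by rw [one_mul, mul_inv_rev, ← mul_assoc, mul_inv_cancel₀ (show n ≠ 0 from h0.ne'), one_mul, one_div]
        _ < 1 := by norm_num
    have hcpt : ∀ t : ℝ, IsCompactOperator ⇑(A + t • (F - K) - 1) := by
      intro t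
      have hco : A + t • (F - K) - 1 = K + t • (F - K) := by
        rw [hK]; abel
      rw [hco]
      simp only [ContinuousLinearMap.coe_add', ContinuousLinearMap.coe_smul',
        ContinuousLinearMap.coe_sub']
      exact hAcpt.add ((hFc.sub hAcpt).smul t)
    have hB1 : B - 1 = F := by rw [hB, hK]; abel
    refine ⟨B, ?_, ?_, ?_⟩
    · have := hunit 1 (by norm_num)
      rwa [one_smul] at this
    · rw [hB1]; exact hFfin
    · refine ⟨⟨⟨fun s => A + (s : ℝ) • (F - K), ?_⟩, ?_, ?_⟩, ?_⟩
      · exact continuous_const.add ((continuous_subtype_val.smul continuous_const))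
      · simp
      · simp [hB]
      · intro s
        refine ⟨hunit (s : ℝ) ?_, hcpt (s : ℝ)⟩
        rw [Real.norm_eq_abs, abs_of_nonneg s.2.1]
        exact s.2.2
end

section
/- Let H be a complex Hilbert space and T, S : H → H bounded self-adjoint operators with T ≥ 0 and S ≥ 0 (nonnegative spectrum). If T - S is a compact operator, then √T - √S is a compact operator, where √T denotes the unique nonnegative self-adjoint square root of T. -/
open Polynomial

section auxiliary

variable {H : Type*} [NormedAddCommGroup H] [InnerProductSpace ℂ H] [CompleteSpace H]

/-- Powers: if `T - S` is compact then `T ^ (n+1) - S ^ (n+1)` is compact. -/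
lemma stmt9_pow_compact (T S : H →L[ℂ] H) (h : IsCompactOperator ⇑(T - S)) :
    ∀ n : ℕ, IsCompactOperator ⇑(T ^ (n + 1) - S ^ (n + 1)) := by
  intro n
  induction n with
  | zero => simpa using h
  | succ n ih =>
    have key : T ^ (n + 1 + 1) - S ^ (n + 1 + 1)
        = T * (T ^ (n + 1) - S ^ (n + 1)) + (T - S) * S ^ (n + 1) := by
      rw [mul_sub, sub_mul, ← pow_succ', ← pow_succ']
      abel
    rw [key]
    have h1 : IsCompactOperator (⇑T ∘ ⇑(T ^ (n + 1) - S ^ (n + 1))) := ih.clm_comp T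
    have h2 : IsCompactOperator (⇑(T - S) ∘ ⇑(S ^ (n + 1))) := h.comp_clm (S ^ (n + 1))
    have heq : ⇑(T * (T ^ (n + 1) - S ^ (n + 1)) + (T - S) * S ^ (n + 1))
        = (⇑T ∘ ⇑(T ^ (n + 1) - S ^ (n + 1))) + (⇑(T - S) ∘ ⇑(S ^ (n + 1))) := by
      ext v
      simp [ContinuousLinearMap.mul_def]
    rw [heq]
    exact h1.add h2

/-- Finite sums of compact operators are compact. -/
lemma stmt9_sum_compact {ι : Type*} (s : Finset ι) (F : ι → (H →L[ℂ] H))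
    (h : ∀ i ∈ s, IsCompactOperator ⇑(F i)) :
    IsCompactOperator ⇑(∑ i ∈ s, F i) := by
  classical
  induction s using Finset.induction with
  | empty => simpa using (isCompactOperator_zero : IsCompactOperator (0 : H → H))
  | @insert a s ha ih =>
    rw [Finset.sum_insert ha]
    have h1 := h a (Finset.mem_insert_self a s)
    have h2 := ih fun i hi => h i (Finset.mem_insert_of_mem hi)
    rw [ContinuousLinearMap.coe_add']
    exact h1.add h2

/-- Polynomials with zero constant term preserve compactness of differences. -/
lemma stmt9_poly_compact (T S : H →L[ℂ] H) (h : IsCompactOperator ⇑(T - S))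
    (p : ℝ[X]) (hp : p.coeff 0 = 0) :
    IsCompactOperator ⇑(aeval T p - aeval S p) := by
  have key : aeval T p - aeval S p
      = ∑ i ∈ Finset.range (p.natDegree + 1), (p.coeff i • (T ^ i - S ^ i)) := by
    rw [Polynomial.aeval_eq_sum_range, Polynomial.aeval_eq_sum_range, ← Finset.sum_sub_distrib]
    simp [smul_sub]
  rw [key]
  apply stmt9_sum_compact
  intro i _
  match i with
  | 0 =>
    simpa [hp] using (isCompactOperator_zero : IsCompactOperator (0 : H → H))
  | (k + 1) =>
    have := (stmt9_pow_compact T S h k).smul (p.coeff (k + 1))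
    simpa [ContinuousLinearMap.coe_smul'] using this

set_option synthInstance.maxHeartbeats 1000000 in
/-- A positive square root equals the `cfc` of `Real.sqrt`. -/
lemma stmt9_sqrt_eq (T R : H →L[ℂ] H) (hT : T.IsPositive)
    (hR : R.IsPositive) (hRT : R ∘L R = T) :
    R = cfc Real.sqrt T := by
  have hTpos : (0 : H →L[ℂ] H) ≤ T := (ContinuousLinearMap.nonneg_iff_isPositive T).mpr hT
  have hRpos : (0 : H →L[ℂ] H) ≤ R := (ContinuousLinearMap.nonneg_iff_isPositive R).mpr hR
  have h1 : CFC.sqrt T = R := CFC.sqrt_unique (by rw [ContinuousLinearMap.mul_def, hRT]) hRpos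
  have hmul : cfc Real.sqrt T * cfc Real.sqrt T = T := by
    rw [← cfc_mul Real.sqrt Real.sqrt T (by fun_prop) (by fun_prop)]
    have hcongr : (spectrum ℝ T).EqOn (fun x => Real.sqrt x * Real.sqrt x) id := fun x hx =>
      Real.mul_self_sqrt (spectrum_nonneg_of_nonneg hTpos hx)
    rw [cfc_congr hcongr, cfc_id ℝ T]
  have hnn : (0 : H →L[ℂ] H) ≤ cfc Real.sqrt T :=
    cfc_nonneg fun x _ => Real.sqrt_nonneg x
  have h2 : CFC.sqrt T = cfc Real.sqrt T := CFC.sqrt_unique hmul hnn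
  rw [← h1, h2]

end auxiliary

/-- If `T, S` are bounded nonnegative self-adjoint operators on a complex
Hilbert space with `T - S` compact, then `√T - √S` is compact, where `√T` is the unique
nonnegative self-adjoint square root of `T` (here represented by an arbitrary
nonnegative self-adjoint `R` with `R ∘ R = T`, which is unique). -/
theorem stmt_9 {H : Type*} [NormedAddCommGroup H] [InnerProductSpace ℂ H]
    [CompleteSpace H]
    (T S R R' : H →L[ℂ] H)
    (hT : T.IsPositive) (hS : S.IsPositive)
    (hTS : IsCompactOperator ⇑(T - S))
    (hR : R.IsPositive) (hRT : R ∘L R = T)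
    (hR' : R'.IsPositive) (hR'S : R' ∘L R' = S) :
    IsCompactOperator ⇑(R - R') := by
  rcases subsingleton_or_nontrivial H with hsub | hnt
  · have : ⇑(R - R') = (0 : H → H) := funext fun x => Subsingleton.elim _ _
    rw [this]
    exact isCompactOperator_zero
  rw [stmt9_sqrt_eq T R hT hR hRT, stmt9_sqrt_eq S R' hS hR' hR'S]
  have hTsa : IsSelfAdjoint T := hT.isSelfAdjoint
  have hSsa : IsSelfAdjoint S := hS.isSelfAdjoint
  set D : H →L[ℂ] H := cfc Real.sqrt T - cfc Real.sqrt S with hD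
  have hclosed : IsClosed {f : H →L[ℂ] H | IsCompactOperator ⇑f} :=
    isClosed_setOf_isCompactOperator
  have hmem : D ∈ closure {f : H →L[ℂ] H | IsCompactOperator ⇑f} := by
    rw [Metric.mem_closure_iff]
    intro ε hε
    set M : ℝ := max ‖T‖ ‖S‖ with hM
    have hM0 : (0 : ℝ) ≤ M := le_trans (norm_nonneg T) (le_max_left _ _)
    obtain ⟨p, hp⟩ := exists_polynomial_near_of_continuousOn (-M) M Real.sqrt
      Real.continuous_sqrt.continuousOn (ε / 6) (by positivity)
    -- adjust to zero constant term
    set q : ℝ[X] := p - Polynomial.C (p.eval 0) with hq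
    have hq0 : q.coeff 0 = 0 := by
      simp [hq, Polynomial.coeff_sub, Polynomial.coeff_zero_eq_eval_zero]
    have hev0 : (0 : ℝ) ∈ Set.Icc (-M) M := by constructor <;> simp [hM0] <;> linarith
    have hp0 : |p.eval 0| < ε / 6 := by
      have := hp 0 hev0
      simpa using this
    have hqnear : ∀ x ∈ Set.Icc (-M) M, |q.eval x - Real.sqrt x| < ε / 3 := by
      intro x hx
      have h1 := hp x hx
      have : q.eval x - Real.sqrt x = (p.eval x - Real.sqrt x) - p.eval 0 := by
        simp [hq]; ring
      rw [this]
      calc |(p.eval x - Real.sqrt x) - p.eval 0|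
          ≤ |p.eval x - Real.sqrt x| + |p.eval 0| := abs_sub _ _
        _ < ε / 6 + ε / 6 := by gcongr
        _ = ε / 3 := by ring
    -- spectra lie in [-M, M]
    have hspecT : ∀ x ∈ spectrum ℝ T, x ∈ Set.Icc (-M) M := by
      intro x hx
      have := spectrum.norm_le_norm_of_mem hx
      rw [Real.norm_eq_abs] at this
      have : |x| ≤ M := le_trans this (le_max_left _ _)
      exact abs_le.mp this
    have hspecS : ∀ x ∈ spectrum ℝ S, x ∈ Set.Icc (-M) M := by
      intro x hx
      have := spectrum.norm_le_norm_of_mem hx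
      rw [Real.norm_eq_abs] at this
      have : |x| ≤ M := le_trans this (le_max_right _ _)
      exact abs_le.mp this
    refine ⟨aeval T q - aeval S q, stmt9_poly_compact T S hTS q hq0, ?_⟩
    -- estimate the distance
    have hnormT : ‖cfc Real.sqrt T - aeval T q‖ ≤ ε / 3 := by
      rw [← cfc_polynomial q T, ← cfc_sub Real.sqrt q.eval T (by fun_prop) (by fun_prop)]
      refine norm_cfc_le (by positivity) fun x hx => ?_
      rw [Real.norm_eq_abs, abs_sub_comm]
      exact le_of_lt (hqnear x (hspecT x hx))
    have hnormS : ‖cfc Real.sqrt S - aeval S q‖ ≤ ε / 3 := by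
      rw [← cfc_polynomial q S, ← cfc_sub Real.sqrt q.eval S (by fun_prop) (by fun_prop)]
      refine norm_cfc_le (by positivity) fun x hx => ?_
      rw [Real.norm_eq_abs, abs_sub_comm]
      exact le_of_lt (hqnear x (hspecS x hx))
    rw [dist_eq_norm]
    have hsplit : D - (aeval T q - aeval S q)
        = (cfc Real.sqrt T - aeval T q) - (cfc Real.sqrt S - aeval S q) := by
      rw [hD]; abel
    calc ‖D - (aeval T q - aeval S q)‖
        = ‖(cfc Real.sqrt T - aeval T q) - (cfc Real.sqrt S - aeval S q)‖ := by rw [hsplit]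
      _ ≤ ‖cfc Real.sqrt T - aeval T q‖ + ‖cfc Real.sqrt S - aeval S q‖ := norm_sub_le _ _
      _ ≤ ε / 3 + ε / 3 := by gcongr
      _ < ε := by linarith
  rw [hclosed.closure_eq] at hmem
  exact hmem
end

section
/- Let H be a complex Hilbert space and D, D' : H → H bounded operators such that D - D' is compact. Set T = 1 + D†D and T' = 1 + D'†D', which are invertible nonnegative self-adjoint operators, and let R = √T · (√T')⁻¹. Then R is invertible, R - 1 is compact, and there is a norm-continuous path of invertible operators from the identity to R, each of which differs from the identity by a compact operator. -/
set_option synthInstance.maxHeartbeats 1000000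
set_option maxHeartbeats 1000000
set_option linter.unusedSectionVars false
set_option linter.unusedVariables false

open ContinuousLinearMap Polynomial Metric Set

section Aux

variable {H : Type*} [NormedAddCommGroup H] [InnerProductSpace ℂ H] [CompleteSpace H]

/-- Schauder's theorem for Hilbert spaces: the adjoint of a compact operator is compact. -/
lemma my_adjoint_compact {K : H →L[ℂ] H} (hK : IsCompactOperator ⇑K) :
    IsCompactOperator ⇑(ContinuousLinearMap.adjoint K) := by
  set A : H →L[ℂ] H := K ∘L ContinuousLinearMap.adjoint K with hA_def
  have hA : IsCompactOperator ⇑A := hK.comp_clm (ContinuousLinearMap.adjoint K)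
  have key : ∀ z : H, ‖ContinuousLinearMap.adjoint K z‖ ^ 2 ≤ ‖z‖ * ‖A z‖ := by
    intro z
    have h1 : (inner ℂ (ContinuousLinearMap.adjoint K z) (ContinuousLinearMap.adjoint K z))
        = inner ℂ z (A z) := by
      rw [adjoint_inner_left]; rfl
    calc ‖ContinuousLinearMap.adjoint K z‖ ^ 2
        = RCLike.re (inner ℂ (ContinuousLinearMap.adjoint K z)
            (ContinuousLinearMap.adjoint K z)) := by
          rw [inner_self_eq_norm_sq]
      _ = RCLike.re (inner ℂ z (A z)) := by rw [h1]
      _ ≤ ‖(inner ℂ z (A z))‖ := RCLike.re_le_norm _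
      _ ≤ ‖z‖ * ‖A z‖ := norm_inner_le_norm _ _
  rw [show ⇑(ContinuousLinearMap.adjoint K) = ⇑((ContinuousLinearMap.adjoint K).toLinearMap)
    from rfl, isCompactOperator_iff_isCompact_closure_image_closedBall _ one_pos]
  refine TotallyBounded.isCompact_of_isClosed ?_ isClosed_closure
  refine TotallyBounded.closure ?_
  have hTB : TotallyBounded (⇑A '' closedBall 0 1) :=
    ((hA.isCompact_closure_image_closedBall 1).totallyBounded).subset subset_closure
  rw [Metric.totallyBounded_iff]
  intro ε hε
  obtain ⟨t, hts, htf, htcover⟩ :=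
    totallyBounded_iff_subset.mp hTB {p | dist p.1 p.2 < ε ^ 2 / 4}
      (Metric.dist_mem_uniformity (by positivity))
  have hchoice : ∀ c ∈ t, ∃ x, x ∈ closedBall (0 : H) 1 ∧ A x = c := fun c hc => hts hc
  choose! g hgB hgA using hchoice
  refine ⟨(fun c => ContinuousLinearMap.adjoint K (g c)) '' t, htf.image _, ?_⟩
  rintro _ ⟨x, hxB, rfl⟩
  have hx2 := htcover ⟨x, hxB, rfl⟩
  obtain ⟨c, hct, hcball⟩ := Set.mem_iUnion₂.mp hx2
  refine Set.mem_iUnion₂.mpr ⟨ContinuousLinearMap.adjoint K (g c), ⟨c, hct, rfl⟩, ?_⟩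
  rw [mem_ball, dist_eq_norm]
  have hz : ‖x - g c‖ ≤ 2 := by
    have h1 : ‖x‖ ≤ 1 := by simpa using hxB
    have h2 : ‖g c‖ ≤ 1 := by simpa using hgB c hct
    calc ‖x - g c‖ ≤ ‖x‖ + ‖g c‖ := norm_sub_le _ _
      _ ≤ 2 := by linarith
  have hAz : ‖A (x - g c)‖ < ε ^ 2 / 4 := by
    rw [map_sub, hgA c hct]
    have : dist (A x) c < ε ^ 2 / 4 := hcball
    rwa [dist_eq_norm] at this
  have hk := key (x - g c)
  have hsq : ‖ContinuousLinearMap.adjoint K (x - g c)‖ ^ 2 < ε ^ 2 := by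
    calc ‖ContinuousLinearMap.adjoint K (x - g c)‖ ^ 2 ≤ ‖x - g c‖ * ‖A (x - g c)‖ := hk
      _ ≤ 2 * ‖A (x - g c)‖ := by
          have := norm_nonneg (A (x - g c)); nlinarith
      _ < 2 * (ε ^ 2 / 4) := by linarith
      _ ≤ ε ^ 2 := by nlinarith
  have := lt_of_pow_lt_pow_left₀ 2 hε.le hsq
  rwa [map_sub] at this

lemma my_pow_diff_compact {S S' : H →L[ℂ] H} (h : IsCompactOperator ⇑(S - S')) (n : ℕ) :
    IsCompactOperator ⇑(S ^ n - S' ^ n) := by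
  induction n with
  | zero => simpa using isCompactOperator_zero
  | succ n ih =>
    have hrw : S ^ (n + 1) - S' ^ (n + 1) = S ^ n * (S - S') + (S ^ n - S' ^ n) * S' := by
      rw [pow_succ, pow_succ, mul_sub, sub_mul]; abel
    rw [hrw]
    have h1 : IsCompactOperator ⇑(S ^ n * (S - S')) := h.continuous_comp (S ^ n).continuous
    have h2 : IsCompactOperator ⇑((S ^ n - S' ^ n) * S') := ih.comp_clm S'
    exact (h1.add h2 : IsCompactOperator (⇑(S ^ n * (S - S')) + ⇑((S ^ n - S' ^ n) * S')))

lemma my_aeval_diff_compact {S S' : H →L[ℂ] H} (h : IsCompactOperator ⇑(S - S'))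
    (p : ℝ[X]) : IsCompactOperator ⇑(aeval S p - aeval S' p) := by
  induction p using Polynomial.induction_on' with
  | add p q hp hq =>
    have hrw : aeval S (p + q) - aeval S' (p + q)
        = (aeval S p - aeval S' p) + (aeval S q - aeval S' q) := by
      rw [map_add, map_add]; abel
    rw [hrw]
    exact (hp.add hq : IsCompactOperator (⇑(aeval S p - aeval S' p) + ⇑(aeval S q - aeval S' q)))
  | monomial n a =>
    have hrw : aeval S (monomial n a) - aeval S' (monomial n a) = a • (S ^ n - S' ^ n) := by
      rw [aeval_monomial, aeval_monomial, smul_sub]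
      simp [Algebra.algebraMap_eq_smul_one, smul_mul_assoc]
    rw [hrw]
    exact (my_pow_diff_compact h n).smul a

/-- If two nonnegative operators differ by a compact operator, so do their square roots. -/
lemma my_sqrt_diff_compact {S S' : H →L[ℂ] H} (hS : 0 ≤ S) (hS' : 0 ≤ S')
    (h : IsCompactOperator ⇑(S - S')) :
    IsCompactOperator ⇑(cfc Real.sqrt S - cfc Real.sqrt S') := by
  have hsaS : IsSelfAdjoint S := .of_nonneg hS
  have hsaS' : IsSelfAdjoint S' := .of_nonneg hS'
  set M := max (‖S‖ * ‖(1 : H →L[ℂ] H)‖) (‖S'‖ * ‖(1 : H →L[ℂ] H)‖) with hM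
  have hspecS : ∀ x ∈ spectrum ℝ S, x ∈ Set.Icc (0:ℝ) M := fun x hx =>
    ⟨spectrum_nonneg_of_nonneg hS hx,
      ((Real.le_norm_self x).trans (spectrum.norm_le_norm_mul_of_mem hx)).trans (le_max_left _ _)⟩
  have hspecS' : ∀ x ∈ spectrum ℝ S', x ∈ Set.Icc (0:ℝ) M := fun x hx =>
    ⟨spectrum_nonneg_of_nonneg hS' hx,
      ((Real.le_norm_self x).trans (spectrum.norm_le_norm_mul_of_mem hx)).trans (le_max_right _ _)⟩
  have hmem : cfc Real.sqrt S - cfc Real.sqrt S'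
      ∈ closure {f : H →L[ℂ] H | IsCompactOperator ⇑f} := by
    rw [Metric.mem_closure_iff]
    intro ε hε
    obtain ⟨p, hp⟩ := exists_polynomial_near_of_continuousOn 0 M Real.sqrt
      (Real.continuous_sqrt.continuousOn) (ε / 4) (by positivity)
    refine ⟨aeval S p - aeval S' p, my_aeval_diff_compact h p, ?_⟩
    have key : ∀ (T : H →L[ℂ] H), IsSelfAdjoint T → (∀ x ∈ spectrum ℝ T, x ∈ Set.Icc (0:ℝ) M) →
        ‖cfc Real.sqrt T - aeval T p‖ ≤ ε / 4 := by
      intro T hsa hspec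
      rw [← cfc_polynomial p T, ← cfc_sub Real.sqrt (fun x => eval x p) T
        (Real.continuous_sqrt.continuousOn) p.continuous.continuousOn]
      refine norm_cfc_le (by positivity) fun x hx => ?_
      have := hp x (hspec x hx)
      rw [Real.norm_eq_abs]
      rw [abs_sub_comm] at this
      linarith [le_of_lt this]
    have h1 := key S hsaS hspecS
    have h2 := key S' hsaS' hspecS'
    rw [dist_eq_norm]
    have hrw : cfc Real.sqrt S - cfc Real.sqrt S' - (aeval S p - aeval S' p)
        = (cfc Real.sqrt S - aeval S p) - (cfc Real.sqrt S' - aeval S' p) := by abel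
    calc ‖cfc Real.sqrt S - cfc Real.sqrt S' - (aeval S p - aeval S' p)‖
        ≤ ‖cfc Real.sqrt S - aeval S p‖ + ‖cfc Real.sqrt S' - aeval S' p‖ := by
          rw [hrw]; exact norm_sub_le _ _
      _ ≤ ε / 4 + ε / 4 := add_le_add h1 h2
      _ < ε := by linarith
  exact isClosed_setOf_isCompactOperator.closure_subset hmem

/-- A nonnegative square root of a nonnegative operator equals `cfc Real.sqrt`. -/
lemma my_sqrt_eq_cfc {S Q : H →L[ℂ] H} (hS : 0 ≤ S) (hQ : 0 ≤ Q) (hQS : Q * Q = S) :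
    Q = cfc Real.sqrt S := by
  have h1 : CFC.sqrt S = Q := CFC.sqrt_unique hQS hQ
  have h2 : CFC.sqrt S = cfc Real.sqrt S := by
    refine CFC.sqrt_unique ?_ (cfc_nonneg fun x _ => Real.sqrt_nonneg x)
    have hsa : IsSelfAdjoint S := .of_nonneg hS
    rw [← cfc_mul Real.sqrt Real.sqrt S]
    conv_rhs => rw [← cfc_id ℝ S]
    exact cfc_congr fun x hx => Real.mul_self_sqrt (spectrum_nonneg_of_nonneg hS hx)
  rw [← h1, h2]

lemma my_spectrum_one_le {T : H →L[ℂ] H} (h : (1 : H →L[ℂ] H) ≤ T) :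
    ∀ x ∈ spectrum ℝ T, (1:ℝ) ≤ x := by
  intro x hx
  have h0 : (0:H →L[ℂ] H) ≤ T - 1 := sub_nonneg.mpr h
  have hmem : x - 1 ∈ spectrum ℝ (T - algebraMap ℝ (H →L[ℂ] H) 1) := by
    rw [← spectrum.sub_singleton_eq]
    exact Set.sub_mem_sub hx rfl
  rw [map_one] at hmem
  have := spectrum_nonneg_of_nonneg h0 hmem
  linarith

/-- The path in the invertibles-plus-compact component. -/
lemma my_joinedIn {Q Q' : H →L[ℂ] H} (hQ1 : (1:H →L[ℂ] H) ≤ Q) (hQ'1 : (1:H →L[ℂ] H) ≤ Q')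
    (hc : IsCompactOperator ⇑(Q - Q')) :
    JoinedIn {B : H →L[ℂ] H | IsUnit B ∧ IsCompactOperator ⇑(B - 1)}
      1 (Q * Ring.inverse Q') := by
  set A : ℝ → (H →L[ℂ] H) := fun s => 1 + s • (Q - 1) with hA_def
  set B : ℝ → (H →L[ℂ] H) := fun s => 1 + s • (Q' - 1) with hB_def
  have hone : ∀ (X : H →L[ℂ] H), (1:H →L[ℂ] H) ≤ X → ∀ s : ℝ, 0 ≤ s →
      (1:H →L[ℂ] H) ≤ 1 + s • (X - 1) := by
    intro X hX s hs
    have : (0:H →L[ℂ] H) ≤ s • (X - 1) := smul_nonneg hs (sub_nonneg.mpr hX)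
    exact le_add_of_nonneg_right this
  have hAu : ∀ t : unitInterval, IsUnit (A t) := fun t =>
    CStarAlgebra.isUnit_of_le 1 (hone Q hQ1 t t.2.1) isStrictlyPositive_one
  have hBu : ∀ t : unitInterval, IsUnit (B t) := fun t =>
    CStarAlgebra.isUnit_of_le 1 (hone Q' hQ'1 t t.2.1) isStrictlyPositive_one
  have hBc : Continuous fun t : unitInterval => B (t : ℝ) := by
    simp only [hB_def]
    exact continuous_const.add (continuous_subtype_val.smul continuous_const)
  have hAc : Continuous fun t : unitInterval => A (t : ℝ) := by
    simp only [hA_def]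
    exact continuous_const.add (continuous_subtype_val.smul continuous_const)
  have hIc : Continuous fun t : unitInterval => Ring.inverse (B (t : ℝ)) := by
    rw [continuous_iff_continuousAt]
    intro t
    have h1 : ContinuousAt Ring.inverse (B (t : ℝ)) := by
      obtain ⟨u, hu⟩ := hBu t
      rw [← hu]
      exact NormedRing.inverse_continuousAt u
    exact ContinuousAt.comp (x := t) h1 hBc.continuousAt
  have hsub : ∀ t : unitInterval, A t - B t = (t : ℝ) • (Q - Q') := by
    intro t
    simp only [hA_def, hB_def]
    module
  have hmem : ∀ t : unitInterval, A t * Ring.inverse (B t)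
      ∈ {X : H →L[ℂ] H | IsUnit X ∧ IsCompactOperator ⇑(X - 1)} := by
    intro t
    refine ⟨(hAu t).mul ((isUnit_ringInverse).mpr (hBu t)), ?_⟩
    have heq : A t * Ring.inverse (B t) - 1 = (A t - B t) * Ring.inverse (B t) := by
      rw [sub_mul, Ring.mul_inverse_cancel _ (hBu t)]
    rw [heq, hsub t]
    have h1 : IsCompactOperator ⇑((t:ℝ) • (Q - Q')) := hc.smul (t:ℝ)
    exact h1.comp_clm (Ring.inverse (B t))
  refine ⟨⟨⟨fun t => A t * Ring.inverse (B t), hAc.mul hIc⟩, ?_, ?_⟩, fun t => hmem t⟩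
  · show A 0 * Ring.inverse (B 0) = 1
    simp [hA_def, hB_def, Ring.inverse_one]
  · show A 1 * Ring.inverse (B 1) = Q * Ring.inverse Q'
    simp [hA_def, hB_def]

end Aux

/-- Let `D, D'` be bounded operators on a complex Hilbert space with
`D - D'` compact. Then `T = 1 + D†D` and `T' = 1 + D'†D'` are invertible nonnegative
self-adjoint operators, and `R = √T (√T')⁻¹` (with `√T`, `√T'` the unique nonnegative
self-adjoint square roots, here represented by arbitrary nonnegative self-adjoint
square roots `Q`, `Q'`) is invertible, `R - 1` is compact, and `R` is joined to the
identity by a norm-continuous path inside `{B | B invertible, B - 1 compact}`. -/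
theorem stmt_10 {H : Type*} [NormedAddCommGroup H] [InnerProductSpace ℂ H]
    [CompleteSpace H]
    (D D' T T' Q Q' : H →L[ℂ] H)
    (hDD' : IsCompactOperator ⇑(D - D'))
    (hT : T = 1 + ContinuousLinearMap.adjoint D ∘L D)
    (hT' : T' = 1 + ContinuousLinearMap.adjoint D' ∘L D')
    (hQ : Q.IsPositive) (hQT : Q ∘L Q = T)
    (hQ' : Q'.IsPositive) (hQ'T : Q' ∘L Q' = T') :
    (IsUnit T ∧ T.IsPositive) ∧ (IsUnit T' ∧ T'.IsPositive) ∧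
    IsUnit Q' ∧
    IsUnit (Q * Ring.inverse Q') ∧
    IsCompactOperator ⇑(Q * Ring.inverse Q' - 1) ∧
    JoinedIn {B : H →L[ℂ] H | IsUnit B ∧ IsCompactOperator ⇑(B - 1)}
      1 (Q * Ring.inverse Q') := by
  -- basic positivity facts
  have hAD : (0 : H →L[ℂ] H) ≤ ContinuousLinearMap.adjoint D ∘L D := by
    rw [ContinuousLinearMap.nonneg_iff_isPositive]
    exact ContinuousLinearMap.isPositive_adjoint_comp_self D
  have hAD' : (0 : H →L[ℂ] H) ≤ ContinuousLinearMap.adjoint D' ∘L D' := by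
    rw [ContinuousLinearMap.nonneg_iff_isPositive]
    exact ContinuousLinearMap.isPositive_adjoint_comp_self D'
  have h1T : (1 : H →L[ℂ] H) ≤ T := hT ▸ le_add_of_nonneg_right hAD
  have h1T' : (1 : H →L[ℂ] H) ≤ T' := hT' ▸ le_add_of_nonneg_right hAD'
  have hTnn : (0 : H →L[ℂ] H) ≤ T := zero_le_one.trans h1T
  have hT'nn : (0 : H →L[ℂ] H) ≤ T' := zero_le_one.trans h1T'
  have hTu : IsUnit T := CStarAlgebra.isUnit_of_le 1 h1T isStrictlyPositive_one
  have hT'u : IsUnit T' := CStarAlgebra.isUnit_of_le 1 h1T' isStrictlyPositive_one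
  have hQnn : (0 : H →L[ℂ] H) ≤ Q := (ContinuousLinearMap.nonneg_iff_isPositive Q).mpr hQ
  have hQ'nn : (0 : H →L[ℂ] H) ≤ Q' := (ContinuousLinearMap.nonneg_iff_isPositive Q').mpr hQ'
  -- identify the square roots with the cfc square roots
  have hQc : Q = cfc Real.sqrt T := my_sqrt_eq_cfc hTnn hQnn hQT
  have hQ'c : Q' = cfc Real.sqrt T' := my_sqrt_eq_cfc hT'nn hQ'nn hQ'T
  -- `1 ≤ Q` and `1 ≤ Q'`
  have hone_le : ∀ (S : H →L[ℂ] H), (1 : H →L[ℂ] H) ≤ S → (0:H →L[ℂ] H) ≤ S →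
      (1 : H →L[ℂ] H) ≤ cfc Real.sqrt S := by
    intro S h1S hSnn
    have hsa : IsSelfAdjoint S := .of_nonneg hSnn
    calc (1 : H →L[ℂ] H) = cfc (fun _ : ℝ => (1:ℝ)) S := (cfc_const_one ℝ S).symm
      _ ≤ cfc Real.sqrt S := by
          refine cfc_mono fun x hx => ?_
          have := my_spectrum_one_le h1S x hx
          exact Real.one_le_sqrt.mpr this
  have hQ1 : (1 : H →L[ℂ] H) ≤ Q := hQc ▸ hone_le T h1T hTnn
  have hQ'1 : (1 : H →L[ℂ] H) ≤ Q' := hQ'c ▸ hone_le T' h1T' hT'nn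
  have hQu : IsUnit Q := CStarAlgebra.isUnit_of_le 1 hQ1 isStrictlyPositive_one
  have hQ'u : IsUnit Q' := CStarAlgebra.isUnit_of_le 1 hQ'1 isStrictlyPositive_one
  -- compactness of `T - T'`
  have hTT' : IsCompactOperator ⇑(T - T') := by
    have hEq : T - T' = ContinuousLinearMap.adjoint D * (D - D')
        + ContinuousLinearMap.adjoint (D - D') * D' := by
      rw [hT, hT', map_sub, ← ContinuousLinearMap.mul_def (ContinuousLinearMap.adjoint D) D,
        ← ContinuousLinearMap.mul_def (ContinuousLinearMap.adjoint D') D']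
      noncomm_ring
    rw [hEq]
    have h1 : IsCompactOperator ⇑(ContinuousLinearMap.adjoint D * (D - D')) :=
      hDD'.continuous_comp (ContinuousLinearMap.adjoint D).continuous
    have h2 : IsCompactOperator ⇑(ContinuousLinearMap.adjoint (D - D') * D') :=
      (my_adjoint_compact hDD').comp_clm D'
    exact (h1.add h2 : IsCompactOperator (⇑(ContinuousLinearMap.adjoint D * (D - D'))
      + ⇑(ContinuousLinearMap.adjoint (D - D') * D')))
  -- compactness of `Q - Q'`
  have hQQ' : IsCompactOperator ⇑(Q - Q') := by
    rw [hQc, hQ'c]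
    exact my_sqrt_diff_compact hTnn hT'nn hTT'
  -- compactness of `Q * Q'⁻¹ - 1`
  have hR1 : IsCompactOperator ⇑(Q * Ring.inverse Q' - 1) := by
    have heq : Q * Ring.inverse Q' - 1 = (Q - Q') * Ring.inverse Q' := by
      rw [sub_mul, Ring.mul_inverse_cancel _ hQ'u]
    rw [heq]
    exact hQQ'.comp_clm (Ring.inverse Q')
  exact ⟨⟨hTu, (ContinuousLinearMap.nonneg_iff_isPositive T).mp hTnn⟩,
    ⟨hT'u, (ContinuousLinearMap.nonneg_iff_isPositive T').mp hT'nn⟩,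
    hQ'u, hQu.mul ((isUnit_ringInverse).mpr hQ'u), hR1,
    my_joinedIn hQ1 hQ'1 hQQ'⟩
end

section
/- Let a : ℝ → ℝ be the clamp function a(t) = max(-1, min(1, t)) (so a(t) = t on [-1,1], a ≡ -1 on (-∞,-1], and a ≡ 1 on [1,∞)). Let γ be the 2×2 real matrix diag(1, -1) and J the 2×2 real matrix with rows (0, 1) and (-1, 0). Define g(t) = exp(-∫₀ᵗ a(s) ds). Then a differentiable function f : ℝ → ℝ² satisfies γ·f'(t) + a(t)·J·f(t) = 0 for all t and is square-integrable on ℝ if and only if there exists c ∈ ℝ with f(t) = c · g(t) · (1, 1) for all t. In particular, the space of square-integrable solutions is one-dimensional. -/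
open Real MeasureTheory Set intervalIntegral

noncomputable def aa (t : ℝ) : ℝ := max (-1) (min 1 t)
noncomputable def FF (t : ℝ) : ℝ := ∫ s in (0:ℝ)..t, aa s

lemma aa_cont : Continuous aa := continuous_const.max (continuous_const.min continuous_id)

lemma aa_intInt (p q : ℝ) : IntervalIntegrable aa volume p q := aa_cont.intervalIntegrable p q

lemma FF_hasDeriv (t : ℝ) : HasDerivAt FF (aa t) t :=
  integral_hasDerivAt_right (aa_intInt 0 t) (aa_cont.stronglyMeasurableAtFilter _ _)
    aa_cont.continuousAt

lemma FF_zero : FF 0 = 0 := integral_same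

lemma FF_Icc {t : ℝ} (h1 : -1 ≤ t) (h2 : t ≤ 1) : FF t = t^2/2 := by
  have : FF t = ∫ s in (0:ℝ)..t, s := by
    apply integral_congr
    intro s hs
    have hsub : s ∈ Icc (-1:ℝ) 1 :=
      uIcc_subset_Icc (by constructor <;> norm_num) ⟨h1, h2⟩ hs
    simp only [aa]
    rw [min_eq_right hsub.2, max_eq_right hsub.1]
  rw [this, integral_id]; ring

lemma FF_ge_one {t : ℝ} (h : 1 ≤ t) : FF t = t - 1/2 := by
  have hsplit : FF 1 + ∫ s in (1:ℝ)..t, aa s = FF t :=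
    integral_add_adjacent_intervals (aa_intInt 0 1) (aa_intInt 1 t)
  have h2 : (∫ s in (1:ℝ)..t, aa s) = ∫ s in (1:ℝ)..t, (1:ℝ) := by
    apply integral_congr
    intro s hs
    have hsub : s ∈ Icc (1:ℝ) t := by rwa [uIcc_of_le h] at hs
    simp only [aa]
    rw [min_eq_left hsub.1, max_eq_right (by norm_num)]
  rw [h2, intervalIntegral.integral_const, smul_eq_mul, FF_Icc (by norm_num) le_rfl] at hsplit
  linarith [hsplit]

lemma FF_le_neg_one {t : ℝ} (h : t ≤ -1) : FF t = -t - 1/2 := by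
  have hsplit : FF (-1) + ∫ s in (-1:ℝ)..t, aa s = FF t :=
    integral_add_adjacent_intervals (aa_intInt 0 (-1)) (aa_intInt (-1) t)
  have h2 : (∫ s in (-1:ℝ)..t, aa s) = ∫ s in (-1:ℝ)..t, (-1:ℝ) := by
    apply integral_congr
    intro s hs
    have hsub : s ∈ Icc t (-1:ℝ) := by rwa [uIcc_of_ge h] at hs
    simp only [aa]
    rw [min_eq_right (by linarith [hsub.2]), max_eq_left (by linarith [hsub.2])]
  rw [h2, intervalIntegral.integral_const, smul_eq_mul, FF_Icc le_rfl (by norm_num)] at hsplit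
  have : ((-1:ℝ))^2/2 = 1/2 := by norm_num
  linarith [hsplit]

lemma FF_lb (t : ℝ) : |t| - 1/2 ≤ FF t := by
  rcases le_total t (-1) with h | h
  · rw [FF_le_neg_one h, abs_of_nonpos (by linarith)]
  rcases le_total 1 t with h' | h'
  · rw [FF_ge_one h', abs_of_nonneg (by linarith)]
  · rw [FF_Icc h h']
    nlinarith [sq_abs t, sq_nonneg (|t| - 1)]

lemma FF_nonneg (t : ℝ) : 0 ≤ FF t := by
  rcases le_total t (-1) with h | h
  · rw [FF_le_neg_one h]; linarith
  rcases le_total 1 t with h' | h'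
  · rw [FF_ge_one h']; linarith
  · rw [FF_Icc h h']; positivity


lemma myint : Integrable (fun t : ℝ => Real.exp (-|t|)) volume := by
  have h : IntegrableOn (fun t : ℝ => Real.exp (-|t|)) (Iic 0 ∪ Ioi 0) volume := by
    apply IntegrableOn.union
    · exact (integrableOn_exp_Iic 0).congr_fun
        (fun t ht => by rw [abs_of_nonpos ht, neg_neg]) measurableSet_Iic
    · exact (exp_neg_integrableOn_Ioi 0 one_pos).congr_fun
        (fun t ht => by simp only [abs_of_nonneg (le_of_lt (mem_Ioi.mp ht)), neg_one_mul]) measurableSet_Ioi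
  rwa [Iic_union_Ioi, integrableOn_univ] at h

lemma memℒp_of_expbound (g : ℝ → ℝ) (K : ℝ) (hg : AEStronglyMeasurable g volume)
    (hb : ∀ t, ‖g t‖ ≤ K * Real.exp (1/2 - |t|)) :
    MemLp g 2 volume := by
  have hK : 0 ≤ K := by
    have := hb 0; have h0 : (0:ℝ) ≤ ‖g 0‖ := norm_nonneg _
    nlinarith [Real.exp_pos ((1:ℝ)/2 - |0|)]
  have hc : Continuous fun t : ℝ => K * Real.exp (1/2 - |t|) :=
    continuous_const.mul (Real.continuous_exp.comp (continuous_const.sub continuous_abs))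
  have hdom : MemLp (fun t : ℝ => K * Real.exp (1/2 - |t|)) 2 volume := by
    rw [memLp_two_iff_integrable_sq hc.aestronglyMeasurable]
    have hint : Integrable (fun t : ℝ => (K^2 * Real.exp 1) * Real.exp (-|t|)) volume :=
      myint.const_mul _
    apply hint.mono ((hc.pow 2).aestronglyMeasurable)
    filter_upwards with t
    have h1 : Real.exp (1/2 - |t|) ^ 2 = Real.exp 1 * Real.exp (-|t|) * Real.exp (-|t|) := by
      rw [sq, ← Real.exp_add, ← Real.exp_add, ← Real.exp_add]; ring_nf
    have h2 : Real.exp (-|t|) ≤ 1 := Real.exp_le_one_iff.mpr (by simp [abs_nonneg])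
    have h3 : (0:ℝ) < Real.exp (-|t|) := Real.exp_pos _
    have e1 : ‖(K * Real.exp (1/2 - |t|)) ^ 2‖ = K^2 * (Real.exp 1 * Real.exp (-|t|) * Real.exp (-|t|)) := by
      rw [Real.norm_eq_abs, abs_of_nonneg (by positivity), mul_pow, h1]
    have e2 : ‖K^2 * Real.exp 1 * Real.exp (-|t|)‖ = K^2 * Real.exp 1 * Real.exp (-|t|) := by
      rw [Real.norm_eq_abs, abs_of_nonneg (by positivity)]
    show ‖(K * Real.exp (1/2 - |t|)) ^ 2‖ ≤ _
    rw [e1, e2]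
    nlinarith [mul_nonneg (sub_nonneg.mpr h2) (mul_nonneg (mul_nonneg (sq_nonneg K) (Real.exp_pos 1).le) h3.le)]
  refine hdom.of_le hg (Filter.Eventually.of_forall fun t => ?_)
  have : ‖K * Real.exp (1/2 - |t|)‖ = K * Real.exp (1/2 - |t|) :=
    by rw [Real.norm_eq_abs, abs_of_nonneg (by positivity)]
  rw [this]; exact hb t


lemma norm_one_one : ‖(![1,1] : Fin 2 → ℝ)‖ = 1 := by
  simp [Pi.norm_def, Finset.sup_le_iff]
  rw [show (Finset.univ : Finset (Fin 2)) = {0, 1} by decide]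
  simp

/-- With the clamp function `a(t) = max(-1, min(1, t))`,
`γ = diag(1, -1)`, `J = [[0,1],[-1,0]]`, and `g(t) = exp(-∫₀ᵗ a(s) ds)`, a
differentiable `f : ℝ → ℝ²` satisfies `γ f'(t) + a(t) J f(t) = 0` for all `t` and is
square-integrable if and only if `f = c · g · (1,1)` for some constant `c`. -/
theorem stmt_13 (f : ℝ → Fin 2 → ℝ) (hf : Differentiable ℝ f) :
    ((∀ t : ℝ, (!![(1:ℝ), 0; 0, -1]).mulVec (deriv f t)
        + (max (-1) (min 1 t)) • (!![(0:ℝ), 1; -1, 0]).mulVec (f t) = 0)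
      ∧ MeasureTheory.MemLp f 2 MeasureTheory.volume)
    ↔ ∃ c : ℝ, ∀ t : ℝ,
        f t = (c * Real.exp (-∫ s in (0:ℝ)..t, max (-1) (min 1 s))) • ![1, 1] := by
  have hFt : ∀ t : ℝ, (∫ s in (0:ℝ)..t, max (-1) (min 1 s)) = FF t := fun t => rfl
  constructor
  · rintro ⟨hode, hL2⟩
    have hd : ∀ (t : ℝ) (i : Fin 2), HasDerivAt (fun s => f s i) (deriv f t i) t :=
      fun t => hasDerivAt_pi.mp (hf t).hasDerivAt
    have heq : ∀ t, deriv f t 0 = -(aa t) * f t 1 ∧ deriv f t 1 = -(aa t) * f t 0 := by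
      intro t
      have h0 := congrFun (hode t) 0
      have h1 := congrFun (hode t) 1
      simp [Matrix.mulVec, dotProduct, Fin.sum_univ_two] at h0 h1
      constructor
      · simp only [aa]; linear_combination h0
      · simp only [aa]; linear_combination -h1
    -- u = f0 + f1
    have hu : ∀ t, HasDerivAt (fun s => f s 0 + f s 1) (-(aa t) * (f t 0 + f t 1)) t := by
      intro t
      have h := (hd t 0).add (hd t 1)
      have : deriv f t 0 + deriv f t 1 = -(aa t) * (f t 0 + f t 1) := by
        rw [(heq t).1, (heq t).2]; ring
      rwa [this] at h
    have hv : ∀ t, HasDerivAt (fun s => f s 0 - f s 1) (aa t * (f t 0 - f t 1)) t := by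
      intro t
      have h := (hd t 0).sub (hd t 1)
      have : deriv f t 0 - deriv f t 1 = aa t * (f t 0 - f t 1) := by
        rw [(heq t).1, (heq t).2]; ring
      rwa [this] at h
    have hφ : ∀ t, HasDerivAt (fun s => (f s 0 + f s 1) * Real.exp (FF s)) 0 t := by
      intro t
      have h := (hu t).mul ((FF_hasDeriv t).exp)
      have : -(aa t) * (f t 0 + f t 1) * Real.exp (FF t)
          + (f t 0 + f t 1) * (Real.exp (FF t) * aa t) = 0 := by ring
      rwa [this] at h
    have hψ : ∀ t, HasDerivAt (fun s => (f s 0 - f s 1) * Real.exp (-(FF s))) 0 t := by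
      intro t
      have h := (hv t).mul ((FF_hasDeriv t).neg.exp)
      have : aa t * (f t 0 - f t 1) * Real.exp (-(FF t))
          + (f t 0 - f t 1) * (Real.exp (-(FF t)) * -(aa t)) = 0 := by ring
      simp only [Pi.neg_apply] at h
      rwa [this] at h
    have hu_eq : ∀ t, f t 0 + f t 1 = (f 0 0 + f 0 1) * Real.exp (-(FF t)) := by
      intro t
      have h := is_const_of_deriv_eq_zero (f := fun s => (f s 0 + f s 1) * Real.exp (FF s))
        (fun s => (hφ s).differentiableAt) (fun s => (hφ s).deriv) t 0
      rw [FF_zero, Real.exp_zero, mul_one] at h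
      rw [← h, Real.exp_neg]
      field_simp
    have hv_eq : ∀ t, f t 0 - f t 1 = (f 0 0 - f 0 1) * Real.exp (FF t) := by
      intro t
      have h := is_const_of_deriv_eq_zero (f := fun s => (f s 0 - f s 1) * Real.exp (-(FF s)))
        (fun s => (hψ s).differentiableAt) (fun s => (hψ s).deriv) t 0
      rw [FF_zero, neg_zero, Real.exp_zero, mul_one] at h
      rw [← h, Real.exp_neg]
      field_simp
    -- L² forces f 0 0 - f 0 1 = 0
    have hm0 : MemLp (fun t => f t 0) 2 volume := by
      have := (ContinuousLinearMap.proj (R := ℝ) (φ := fun _ : Fin 2 => ℝ) 0).comp_memLp' hL2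
      exact this
    have hm1 : MemLp (fun t => f t 1) 2 volume := by
      have := (ContinuousLinearMap.proj (R := ℝ) (φ := fun _ : Fin 2 => ℝ) 1).comp_memLp' hL2
      exact this
    have hv2 : MemLp (fun t => f t 0 - f t 1) 2 volume := hm0.sub hm1
    have hv0 : f 0 0 - f 0 1 = 0 := by
      by_contra hne
      have hconstm : MemLp (fun _ : ℝ => f 0 0 - f 0 1) 2 volume := by
        refine hv2.of_le aestronglyMeasurable_const (ae_of_all _ fun t => ?_)
        rw [hv_eq t, Real.norm_eq_abs, Real.norm_eq_abs, abs_mul,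
          abs_of_pos (Real.exp_pos _)]
        nlinarith [abs_nonneg (f 0 0 - f 0 1), Real.one_le_exp (FF_nonneg t)]
      rcases (memLp_const_iff (p := 2) (by norm_num) (by norm_num)).mp hconstm with h | h
      · exact hne h
      · rw [Real.volume_univ] at h; exact absurd h (by simp)
    refine ⟨(f 0 0 + f 0 1) / 2, fun t => ?_⟩
    rw [hFt t]
    have h2 : f t 0 - f t 1 = 0 := by rw [hv_eq t, hv0, zero_mul]
    have e0 : f t 0 = (f 0 0 + f 0 1) / 2 * Real.exp (-(FF t)) := by
      linarith [hu_eq t]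
    have e1 : f t 1 = (f 0 0 + f 0 1) / 2 * Real.exp (-(FF t)) := by
      linarith [hu_eq t]
    funext i
    fin_cases i
    · simpa using e0
    · simpa using e1
  · rintro ⟨c, hc⟩
    have hc' : ∀ t, f t = (c * Real.exp (-(FF t))) • ![1,1] := by
      intro t; rw [hc t, hFt t]
    have hfe : f = fun t => (c * Real.exp (-(FF t))) • (![1,1] : Fin 2 → ℝ) := funext hc'
    constructor
    · intro t
      have h1 : HasDerivAt (fun s => c * Real.exp (-(FF s)))
          (c * (Real.exp (-(FF t)) * -(aa t))) t :=
        (((FF_hasDeriv t).neg).exp).const_mul c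
      have h2 := h1.smul_const (![1,1] : Fin 2 → ℝ)
      rw [← hfe] at h2
      rw [h2.deriv, hc' t]
      funext i
      fin_cases i <;>
        simp [Matrix.mulVec, dotProduct, Fin.sum_univ_two, aa] <;> ring
    · have hFcont : Continuous FF :=
        Differentiable.continuous (fun t => (FF_hasDeriv t).differentiableAt)
      have hgc : Continuous fun t : ℝ => c * Real.exp (-(FF t)) :=
        continuous_const.mul (Real.continuous_exp.comp hFcont.neg)
      refine (memℒp_of_expbound (fun t => c * Real.exp (-(FF t))) |c|
        hgc.aestronglyMeasurable fun t => ?_).of_le hf.continuous.aestronglyMeasurable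
        (Filter.Eventually.of_forall fun t => ?_)
      · rw [Real.norm_eq_abs, abs_mul, Real.abs_exp]
        exact mul_le_mul_of_nonneg_left
          (Real.exp_le_exp.mpr (by linarith [FF_lb t])) (abs_nonneg c)
      · rw [hc' t, norm_smul, norm_one_one, mul_one]
end
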